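/- arXiv:1502.07484 — 3 statements merged into one kernel-verified Lean document; each statement's English description precedes it below -/
import Mathlib

section
/- A finite graph G is a split graph if and only if G has no induced subgraph isomorphic to 2K2, C4, or C5. -/
open SimpleGraph

/-- `G` contains an induced copy of `H`. -/
def ContainsInduced {V W : Type*} (G : SimpleGraph V) (H : SimpleGraph W) : Prop :=
  ∃ f : W ↪ V, ∀ u v, G.Adj (f u) (f v) ↔ H.Adj u v

/-- The path on 5 vertices. -/
def path5 : SimpleGraph (Fin 5) :=
  SimpleGraph.fromRel (fun i j => (i : ℕ) + 1 = (j : ℕ))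

/-- Two disjoint edges. -/
def twoK2 : SimpleGraph (Fin 4) :=
  SimpleGraph.fromRel (fun i j => (i = 0 ∧ j = 1) ∨ (i = 2 ∧ j = 3))

/-- The cycle on `n` vertices (for `n ≥ 3`). -/
def cycG (n : ℕ) : SimpleGraph (Fin n) :=
  SimpleGraph.fromRel (fun i j => ((i : ℕ) + 1) % n = (j : ℕ))

/-- `G` contains an induced wheel: an induced (chordless) cycle of length at least 4
plus a vertex with at least three neighbors on the cycle. -/
def ContainsWheel {V : Type*} (G : SimpleGraph V) : Prop :=
  ∃ n : ℕ, 4 ≤ n ∧ ∃ (f : Fin n ↪ V) (hub : V),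
    (∀ i, hub ≠ f i) ∧
    (∀ i j, G.Adj (f i) (f j) ↔ (cycG n).Adj i j) ∧
    3 ≤ {i : Fin n | G.Adj hub (f i)}.ncard

/-- `G` contains an induced wheel on at most `k` vertices. -/
def ContainsWheelLE {V : Type*} (G : SimpleGraph V) (k : ℕ) : Prop :=
  ∃ n : ℕ, 4 ≤ n ∧ n + 1 ≤ k ∧ ∃ (f : Fin n ↪ V) (hub : V),
    (∀ i, hub ≠ f i) ∧
    (∀ i j, G.Adj (f i) (f j) ↔ (cycG n).Adj i j) ∧
    3 ≤ {i : Fin n | G.Adj hub (f i)}.ncard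

/-- `s` is the vertex set of a hole (induced cycle of length at least 4) of `G`. -/
def IsHoleSet {V : Type*} (G : SimpleGraph V) (s : Set V) : Prop :=
  ∃ n : ℕ, 4 ≤ n ∧ ∃ f : Fin n ↪ V, Set.range f = s ∧
    ∀ i j, G.Adj (f i) (f j) ↔ (cycG n).Adj i j

/-- `G` is a split graph: its vertex set partitions into a stable set and a clique. -/
def IsSplit {V : Type*} (G : SimpleGraph V) : Prop :=
  ∃ S K : Set V, (∀ v, v ∈ S ∨ v ∈ K) ∧ S ∩ K = ∅ ∧
    (∀ u ∈ S, ∀ v ∈ S, ¬G.Adj u v) ∧ G.IsClique K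

/-! Being split is inherited by induced subgraphs, and `2K₂`, `C₄`, `C₅` are not split.
Conversely, take a maximum clique `K` whose degree sum is as large as possible, and suppose
some edge `xy` avoids `K`. If no vertex of `K` distinguishes `x` from `y`, then, `2K₂` being
excluded, `x` and `y` see all of `K` but one common non-neighbour `z`, and `K - z + x + y` is a
larger clique. Otherwise some `w ∈ K` sees `x` but not `y`; excluding `C₄`, `C₅` and `2K₂`
forces `N(z) ⊊ N(x)` for a non-neighbour `z ∈ K` of `x`, so `K - z + x` is a maximum clique of
larger degree sum. -/

instance : DecidableRel twoK2.Adj := fun _ _ => decidable_of_iff' _ (fromRel_adj _ _ _)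

instance (n : ℕ) : DecidableRel (cycG n).Adj := fun _ _ => decidable_of_iff' _ (fromRel_adj _ _ _)

section SplitGraphs

variable {V W : Type*} {G : SimpleGraph V}

theorem isSplit_iff : IsSplit G ↔ ∃ K : Set V, G.IsClique K ∧ ∀ u ∉ K, ∀ v ∉ K, ¬G.Adj u v := by
  constructor
  · rintro ⟨S, K, hcover, hdisj, hS, hK⟩
    exact ⟨K, hK, fun u hu v hv =>
      hS u ((hcover u).resolve_right hu) v ((hcover v).resolve_right hv)⟩
  · rintro ⟨K, hK, hstable⟩
    exact ⟨Kᶜ, K, fun v => em' (v ∈ K), Set.compl_inter_self K, hstable, hK⟩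

theorem IsSplit.of_containsInduced {H : SimpleGraph W} (hG : IsSplit G)
    (h : ContainsInduced G H) : IsSplit H := by
  obtain ⟨f, hf⟩ := h
  obtain ⟨K, hK, hstable⟩ := isSplit_iff.mp hG
  refine isSplit_iff.mpr ⟨f ⁻¹' K, fun u hu v hv huv => ?_, fun u hu v hv huv => ?_⟩
  · exact (hf u v).mp (hK hu hv (f.injective.ne huv))
  · exact hstable _ hu _ hv ((hf u v).mpr huv)

theorem not_isSplit_of_forall_finset [Fintype V]
    (h : ∀ K : Finset V, G.IsClique (K : Set V) → ∃ u ∉ K, ∃ v ∉ K, G.Adj u v) :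
    ¬IsSplit G := by
  classical
  rw [isSplit_iff]
  rintro ⟨K, hK, hstable⟩
  obtain ⟨u, hu, v, hv, huv⟩ := h K.toFinset (by simpa using hK)
  exact hstable u (by simpa using hu) v (by simpa using hv) huv

theorem not_isSplit_twoK2 : ¬IsSplit twoK2 :=
  not_isSplit_of_forall_finset (by decide)

theorem not_isSplit_cycG_four : ¬IsSplit (cycG 4) :=
  not_isSplit_of_forall_finset (by decide)

theorem not_isSplit_cycG_five : ¬IsSplit (cycG 5) :=
  not_isSplit_of_forall_finset (by decide)

end SplitGraphs

section InducedCopies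

variable {V W : Type*} {G : SimpleGraph V}

theorem containsInduced_of_adj_iff {H : SimpleGraph W} (f : W → V)
    (hf : ∀ u v, G.Adj (f u) (f v) ↔ H.Adj u v)
    (htwin : ∀ i j, i ≠ j → (∀ k, H.Adj i k ↔ H.Adj j k) → f i ≠ f j) :
    ContainsInduced G H := by
  refine ⟨⟨f, fun i j hij => by_contra fun hne => htwin i j hne (fun k => ?_) hij⟩, hf⟩
  rw [← hf, ← hf, hij]

theorem containsInduced_twoK2 {a b c d : V} (hab : G.Adj a b) (hcd : G.Adj c d)
    (hac : ¬G.Adj a c) (had : ¬G.Adj a d) (hbc : ¬G.Adj b c) (hbd : ¬G.Adj b d) :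
    ContainsInduced G twoK2 := by
  have twin_free : ∀ i j : Fin 4, i ≠ j → ¬∀ k, twoK2.Adj i k ↔ twoK2.Adj j k := by decide
  refine containsInduced_of_adj_iff ![a, b, c, d] (fun u v => ?_)
    fun i j hne htwin => absurd htwin (twin_free i j hne)
  fin_cases u <;> fin_cases v <;> simp [twoK2, G.adj_comm, *]

theorem containsInduced_cycG_four {a b c d : V} (hab : G.Adj a b) (hbc : G.Adj b c)
    (hcd : G.Adj c d) (hda : G.Adj d a) (hac : ¬G.Adj a c) (hbd : ¬G.Adj b d)
    (hac' : a ≠ c) (hbd' : b ≠ d) :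
    ContainsInduced G (cycG 4) := by
  have twins : ∀ i j : Fin 4, i ≠ j → (∀ k, (cycG 4).Adj i k ↔ (cycG 4).Adj j k) → j = i + 2 := by
    decide
  refine containsInduced_of_adj_iff ![a, b, c, d] (fun u v => ?_) fun i j hne htwin => ?_
  · fin_cases u <;> fin_cases v <;> simp [cycG, G.adj_comm, hda.symm, *]
  · obtain rfl := twins i j hne htwin
    fin_cases i <;> simp [hac', hbd', hac'.symm, hbd'.symm]

theorem containsInduced_cycG_five {a b c d e : V} (hab : G.Adj a b) (hbc : G.Adj b c)
    (hcd : G.Adj c d) (hde : G.Adj d e) (hea : G.Adj e a) (hac : ¬G.Adj a c)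
    (had : ¬G.Adj a d) (hbd : ¬G.Adj b d) (hbe : ¬G.Adj b e) (hce : ¬G.Adj c e) :
    ContainsInduced G (cycG 5) := by
  have twin_free : ∀ i j : Fin 5, i ≠ j → ¬∀ k, (cycG 5).Adj i k ↔ (cycG 5).Adj j k := by
    decide
  refine containsInduced_of_adj_iff ![a, b, c, d, e] (fun u v => ?_)
    fun i j hne htwin => absurd htwin (twin_free i j hne)
  fin_cases u <;> fin_cases v <;> simp [cycG, G.adj_comm, hea.symm, *]

variable {w x y z : V}

theorem adj_or_adj_of_not_containsInduced_twoK2 {u : V} (h2K2 : ¬ContainsInduced G twoK2)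
    (hxy : G.Adj x y) (huz : G.Adj u z) (hxz : ¬G.Adj x z) (hyz : ¬G.Adj y z) :
    G.Adj x u ∨ G.Adj y u := by
  by_contra! h
  exact h2K2 (containsInduced_twoK2 hxy huz h.1 hxz h.2 hyz)

theorem neighborSet_ssubset_of_not_containsInduced (h2K2 : ¬ContainsInduced G twoK2)
    (hC4 : ¬ContainsInduced G (cycG 4)) (hC5 : ¬ContainsInduced G (cycG 5))
    (hxy : G.Adj x y) (hwx : G.Adj w x) (hwy : ¬G.Adj w y) (hwz : G.Adj w z)
    (hxz : ¬G.Adj x z) (hxz' : x ≠ z) (hwy' : w ≠ y) :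
    G.neighborSet z ⊂ G.neighborSet x := by
  have hyz : ¬G.Adj y z := fun hyz =>
    hC4 (containsInduced_cycG_four hwx.symm hwz hyz.symm hxy.symm hxz hwy hxz' hwy')
  refine (Set.ssubset_iff_of_subset fun c (hzc : G.Adj z c) => ?_).mpr
    ⟨y, hxy, fun hzy : G.Adj z y => hyz hzy.symm⟩
  by_contra hxc
  have hcx : c ≠ x := by rintro rfl; exact hxz hzc.symm
  by_cases hyc : G.Adj y c
  · by_cases hwc : G.Adj w c
    · exact hC4 (containsInduced_cycG_four hwc hyc.symm hxy.symm hwx.symm hwy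
        (fun h => hxc h.symm) hwy' hcx)
    · exact hC5 (containsInduced_cycG_five hxy hyc hzc.symm hwz.symm hwx hxc hxz
        hyz (fun h => hwy h.symm) (fun h => hwc h.symm))
  · exact h2K2 (containsInduced_twoK2 hzc hxy (fun h => hxz h.symm) (fun h => hyz h.symm)
      (fun h => hxc h.symm) (fun h => hyc h.symm))

end InducedCopies

namespace SimpleGraph.IsMaximumClique

variable {V : Type*} [Fintype V] [DecidableEq V] {G : SimpleGraph V} {K : Finset V} {x y z : V}

theorem exists_not_adj (hK : G.IsMaximumClique K) (hx : x ∉ K) : ∃ z ∈ K, ¬G.Adj x z := by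
  by_contra! h
  have := hK.maximum (insert x K) (by
    rw [Finset.coe_insert]; exact hK.isClique.insert fun b hb _ => h b hb)
  rw [Finset.card_insert_of_notMem hx] at this
  omega

theorem exchange (hK : G.IsMaximumClique K) (hz : z ∈ K) (hx : x ∉ K)
    (h : ∀ b ∈ K, b ≠ z → G.Adj x b) : G.IsMaximumClique (insert x (K.erase z)) := by
  have hcard : (insert x (K.erase z)).card = K.card := by
    rw [Finset.card_insert_of_notMem (fun hx' => hx (Finset.mem_of_mem_erase hx')),
      Finset.card_erase_add_one hz]
  refine ⟨?_, fun t ht => hcard ▸ hK.maximum t ht⟩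
  rw [Finset.coe_insert]
  exact (hK.isClique.subset (Finset.erase_subset z K)).insert fun b hb _ =>
    h b (Finset.mem_of_mem_erase hb) (Finset.ne_of_mem_erase hb)

theorem not_adj_of_forall_adj_iff (h2K2 : ¬ContainsInduced G twoK2) (hK : G.IsMaximumClique K)
    (hx : x ∉ K) (hy : y ∉ K) (hxy : ∀ w ∈ K, G.Adj x w ↔ G.Adj y w) : ¬G.Adj x y := by
  intro hadj
  obtain ⟨z, hz, hxz⟩ := hK.exists_not_adj hx
  have hyz : ¬G.Adj y z := fun h => hxz ((hxy z hz).mpr h)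
  have hboth : ∀ b ∈ K.erase z, G.Adj x b ∧ G.Adj y b := by
    intro b hb
    have hbK := Finset.mem_of_mem_erase hb
    have hiff := hxy b hbK
    rcases adj_or_adj_of_not_containsInduced_twoK2 h2K2 hadj
      (hK.isClique hbK hz (Finset.ne_of_mem_erase hb)) hxz hyz with h | h
    · exact ⟨h, hiff.mp h⟩
    · exact ⟨hiff.mpr h, h⟩
  have hclique : G.IsClique (insert x (insert y (K.erase z)) : Finset V) := by
    rw [Finset.coe_insert, Finset.coe_insert]
    refine ((hK.isClique.subset (Finset.erase_subset z K)).insert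
      fun b hb _ => (hboth b hb).2).insert fun b hb _ => ?_
    rcases hb with rfl | hb
    · exact hadj
    · exact (hboth b hb).1
  have := hK.maximum _ hclique
  rw [Finset.card_insert_of_notMem, Finset.card_insert_of_notMem
    (fun h => hy (Finset.mem_of_mem_erase h)), Finset.card_erase_add_one hz] at this
  · omega
  · simp [hadj.ne, hx]

variable [DecidableRel G.Adj]

theorem not_adj_of_adj_not_adj (h2K2 : ¬ContainsInduced G twoK2)
    (hC4 : ¬ContainsInduced G (cycG 4)) (hC5 : ¬ContainsInduced G (cycG 5))
    (hK : G.IsMaximumClique K)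
    (hsum : ∀ L, G.IsMaximumClique L → ∑ v ∈ L, G.degree v ≤ ∑ v ∈ K, G.degree v)
    (hx : x ∉ K) (hy : y ∉ K) {w : V} (hw : w ∈ K) (hxw : G.Adj x w) (hyw : ¬G.Adj y w) :
    ¬G.Adj x y := by
  intro hxy
  obtain ⟨z, hz, hxz⟩ := hK.exists_not_adj hx
  have hwz : w ≠ z := by rintro rfl; exact hxz hxw
  have hN : G.neighborSet z ⊂ G.neighborSet x :=
    neighborSet_ssubset_of_not_containsInduced h2K2 hC4 hC5 hxy hxw.symm (fun h => hyw h.symm)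
      (hK.isClique hw hz hwz) hxz (by rintro rfl; exact hx hz) (by rintro rfl; exact hy hw)
  have hK' := hK.exchange hz hx fun b hb hbz => hN.subset (hK.isClique hb hz hbz).symm
  have hdeg : G.degree z < G.degree x := by
    rw [← G.card_neighborSet_eq_degree, ← G.card_neighborSet_eq_degree]
    exact Set.card_lt_card hN
  have := hsum _ hK'
  rw [Finset.sum_insert (fun h => hx (Finset.mem_of_mem_erase h)),
    ← Finset.add_sum_erase K _ hz] at this
  omega

theorem not_adj_of_forall_sum_degree_le (h2K2 : ¬ContainsInduced G twoK2)
    (hC4 : ¬ContainsInduced G (cycG 4)) (hC5 : ¬ContainsInduced G (cycG 5))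
    (hK : G.IsMaximumClique K)
    (hsum : ∀ L, G.IsMaximumClique L → ∑ v ∈ L, G.degree v ≤ ∑ v ∈ K, G.degree v)
    (hx : x ∉ K) (hy : y ∉ K) : ¬G.Adj x y := by
  intro hxy
  by_cases hiff : ∀ w ∈ K, G.Adj x w ↔ G.Adj y w
  · exact hK.not_adj_of_forall_adj_iff h2K2 hx hy hiff hxy
  push Not at hiff
  obtain ⟨w, hw, ⟨hxw, hyw⟩ | ⟨hxw, hyw⟩⟩ := hiff
  · exact hK.not_adj_of_adj_not_adj h2K2 hC4 hC5 hsum hx hy hw hxw hyw hxy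
  · exact hK.not_adj_of_adj_not_adj h2K2 hC4 hC5 hsum hy hx hw hyw hxw hxy.symm

end SimpleGraph.IsMaximumClique

theorem SimpleGraph.exists_isMaximumClique_forall_sum_degree_le {V : Type*} [Fintype V]
    (G : SimpleGraph V) [DecidableRel G.Adj] :
    ∃ K, G.IsMaximumClique K ∧
      ∀ L, G.IsMaximumClique L → ∑ v ∈ L, G.degree v ≤ ∑ v ∈ K, G.degree v :=
  Set.exists_max_image {K | G.IsMaximumClique K} _ (Set.toFinite _) G.maximumClique_exists

theorem isSplit_of_not_containsInduced {V : Type*} [Fintype V] {G : SimpleGraph V}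
    (h2K2 : ¬ContainsInduced G twoK2) (hC4 : ¬ContainsInduced G (cycG 4))
    (hC5 : ¬ContainsInduced G (cycG 5)) : IsSplit G := by
  classical
  obtain ⟨K, hK, hsum⟩ := G.exists_isMaximumClique_forall_sum_degree_le
  exact isSplit_iff.mpr ⟨K, hK.isClique, fun x hx y hy =>
    hK.not_adj_of_forall_sum_degree_le h2K2 hC4 hC5 hsum hx hy⟩

theorem stmt_4 {V : Type*} [Fintype V] (G : SimpleGraph V) :
    IsSplit G ↔
      ¬ContainsInduced G twoK2 ∧ ¬ContainsInduced G (cycG 4) ∧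
        ¬ContainsInduced G (cycG 5) := by
  refine ⟨fun hG => ⟨?_, ?_, ?_⟩,
    fun ⟨h2K2, hC4, hC5⟩ => isSplit_of_not_containsInduced h2K2 hC4 hC5⟩
  · exact fun h => not_isSplit_twoK2 (hG.of_containsInduced h)
  · exact fun h => not_isSplit_cycG_four (hG.of_containsInduced h)
  · exact fun h => not_isSplit_cycG_five (hG.of_containsInduced h)
end

section
/- In any graph G in class B, every hole has exactly four vertices, two in X and two in Y, and every vertex outside any hole H has at most two neighbors on H; consequently G contains no wheel. -/
/-!
A vertex outside `X ∪ Y` has all its neighbours among the adjacent pair `x, y`, whereas every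
vertex of a hole has two non-adjacent neighbours on it; so holes live in the bipartite graph on
`X ∪ Y`. There they have even length, and length at least `6` would expose an induced `P5`, so
every hole is a `C4` alternating between `X` and `Y`. A vertex of `X` (resp. `Y`) can only see
the two `Y`- (resp. `X`-) vertices of such a hole, and any other vertex only `x` and `y`;
hence no vertex has three neighbours on a hole.
-/

open SimpleGraph

lemma Nat.add_one_mod_of_lt {c N : ℕ} (hc : c < N) :
    (c + 1) % N = if c + 1 = N then 0 else c + 1 := by
  split_ifs with h
  · rw [h, Nat.mod_self]
  · exact Nat.mod_eq_of_lt (by omega)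

lemma cycG_eq_cycleGraph (n : ℕ) : cycG n = cycleGraph n := by
  obtain _ | _ | n := n
  · exact Subsingleton.elim _ _
  · ext u v
    simp [cycG, Fin.fin_one_eq_zero u, Fin.fin_one_eq_zero v]
  · ext u v
    rw [cycleGraph_adj, sub_eq_iff_eq_add, sub_eq_iff_eq_add]
    simp only [cycG, fromRel_adj, Fin.ext_iff, Fin.val_add, Fin.val_one, add_comm 1,
      Nat.add_one_mod_of_lt u.isLt, Nat.add_one_mod_of_lt v.isLt]
    split_ifs <;> omega

lemma path5_eq_pathGraph : path5 = pathGraph 5 := by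
  ext u v
  simp only [path5, fromRel_adj, pathGraph_adj, ne_eq, Fin.ext_iff]
  omega

namespace SimpleGraph

lemma cycleGraph_adj_castLE_iff {m n : ℕ} (h : m < n) (i j : Fin m) :
    (cycleGraph n).Adj (Fin.castLE h.le i) (Fin.castLE h.le j) ↔ (pathGraph m).Adj i j := by
  rw [← cycG_eq_cycleGraph]
  simp only [cycG, fromRel_adj, pathGraph_adj, ne_eq, Fin.ext_iff, Fin.val_castLE]
  rw [Nat.mod_eq_of_lt (by omega), Nat.mod_eq_of_lt (by omega)]
  omega

def pathGraphEmbeddingCycleGraph {m n : ℕ} (h : m < n) : pathGraph m ↪g cycleGraph n where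
  toEmbedding := Fin.castLEEmb h.le
  map_rel_iff' := cycleGraph_adj_castLE_iff h _ _

open Fin.CommRing in
lemma not_isClique_neighborSet_cycleGraph {n : ℕ} (hn : 4 ≤ n) (i : Fin n) :
    ¬(cycleGraph n).IsClique ((cycleGraph n).neighborSet i) := by
  obtain ⟨n, rfl⟩ : ∃ k, n = k + 4 := ⟨n - 4, by omega⟩
  rw [cycleGraph_neighborSet, isClique_pair, cycleGraph_adj]
  have h2 : (2 : Fin (n + 4)) ≠ 0 := by simp [Fin.ext_iff, Nat.mod_eq_of_lt]
  have h3 : (3 : Fin (n + 4)) ≠ 0 := by simp [Fin.ext_iff, Nat.mod_eq_of_lt]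
  have h21 : (2 : Fin (n + 4)) ≠ 1 := by simp [Fin.ext_iff, Nat.mod_eq_of_lt]
  intro h
  rcases h (fun e => h2 (by linear_combination -e)) with e | e
  · exact h3 (by linear_combination -e)
  · exact h21 (by linear_combination e)

lemma even_of_cycleGraph_colorable_two {n : ℕ} (hn : 2 ≤ n) (h : (cycleGraph n).Colorable 2) :
    Even n := by
  by_contra hodd
  have h3 := chromaticNumber_cycleGraph_of_odd n hn (Nat.not_even_iff_odd.mp hodd)
  have := h3 ▸ h.chromaticNumber_le
  norm_num at this

lemma Embedding.isClique_neighborSet {V W : Type*} {H : SimpleGraph W} {G : SimpleGraph V}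
    (φ : H ↪g G) {v : W} (h : G.IsClique (G.neighborSet (φ v))) :
    H.IsClique (H.neighborSet v) := by
  intro a ha b hb hab
  exact φ.map_adj_iff.mp (h (φ.map_adj_iff.mpr ha) (φ.map_adj_iff.mpr hb) (φ.injective.ne hab))

end SimpleGraph

lemma IsHoleSet.exists_embedding {V : Type*} {G : SimpleGraph V} {s : Set V}
    (hs : IsHoleSet G s) : ∃ n, 4 ≤ n ∧ ∃ φ : cycleGraph n ↪g G, Set.range φ = s := by
  obtain ⟨n, hn, f, rfl, hf⟩ := hs
  exact ⟨n, hn, ⟨f, fun {i j} => by rw [hf, cycG_eq_cycleGraph]⟩, rfl⟩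

lemma ContainsWheel.exists_isHoleSet {V : Type*} {G : SimpleGraph V} (h : ContainsWheel G) :
    ∃ s, IsHoleSet G s ∧ ∃ v ∉ s, 3 ≤ {u ∈ s | G.Adj v u}.ncard := by
  obtain ⟨n, hn, f, hub, hne, hf, hcard⟩ := h
  refine ⟨Set.range f, ⟨n, hn, f, rfl, hf⟩, hub, fun ⟨i, hi⟩ => hne i hi.symm, ?_⟩
  change 3 ≤ (f ⁻¹' {u | G.Adj hub u}).ncard at hcard
  rwa [← Set.ncard_image_of_injective _ f.injective, Set.image_preimage_eq_range_inter] at hcard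

section Bipartite

variable {V : Type*} {G : SimpleGraph V} {X Y : Set V}

lemma mem_iff_notMem_of_adj (hXs : ∀ u ∈ X, ∀ v ∈ X, ¬G.Adj u v)
    (hYs : ∀ u ∈ Y, ∀ v ∈ Y, ¬G.Adj u v) {a b : V} (ha : a ∈ X ∪ Y) (hb : b ∈ X ∪ Y)
    (hab : G.Adj a b) : b ∈ X ↔ a ∉ X := by
  refine ⟨fun hbX haX => hXs a haX b hbX hab, fun haX => hb.resolve_right fun hbY => ?_⟩
  exact hYs a (ha.resolve_left haX) b hbY hab

lemma sep_adj_subset_inter (hXs : ∀ u ∈ X, ∀ v ∈ X, ¬G.Adj u v) {s : Set V} (hs : s ⊆ X ∪ Y)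
    {v : V} (hv : v ∈ X) : {u ∈ s | G.Adj v u} ⊆ s ∩ Y :=
  fun u ⟨hu, hvu⟩ => ⟨hu, (hs hu).resolve_left fun huX => hXs v hv u huX hvu⟩

lemma colorable_two_of_hom {W : Type*} {H : SimpleGraph W} (hXs : ∀ u ∈ X, ∀ v ∈ X, ¬G.Adj u v)
    (hYs : ∀ u ∈ Y, ∀ v ∈ Y, ¬G.Adj u v) (φ : H →g G) (hφ : ∀ i, φ i ∈ X ∪ Y) :
    H.Colorable 2 := by
  classical
  refine (Coloring.mk (fun i => decide (φ i ∈ X)) fun {i j} hij => ?_).colorable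
  have := mem_iff_notMem_of_adj hXs hYs (hφ i) (hφ j) (φ.map_adj hij)
  simp only [ne_eq, decide_eq_decide]
  tauto

lemma length_eq_four_of_isHole (hXs : ∀ u ∈ X, ∀ v ∈ X, ¬G.Adj u v)
    (hYs : ∀ u ∈ Y, ∀ v ∈ Y, ¬G.Adj u v)
    (hP5 : ¬∃ f : Fin 5 ↪ V, (∀ i, f i ∈ X ∪ Y) ∧ ∀ i j, G.Adj (f i) (f j) ↔ path5.Adj i j)
    {n : ℕ} (hn : 4 ≤ n) (φ : cycleGraph n ↪g G) (hφ : ∀ i, φ i ∈ X ∪ Y) : n = 4 := by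
  have hle : n ≤ 5 := by
    by_contra! h
    let ψ : pathGraph 5 ↪g G := (pathGraphEmbeddingCycleGraph h).trans φ
    refine hP5 ⟨ψ.toEmbedding, fun i => hφ _, fun i j => ?_⟩
    rw [path5_eq_pathGraph]
    exact ψ.map_adj_iff
  obtain ⟨k, hk⟩ := even_of_cycleGraph_colorable_two (by omega)
    (colorable_two_of_hom hXs hYs φ.toHom hφ)
  omega

lemma ncard_range_inter_eq_two (hXs : ∀ u ∈ X, ∀ v ∈ X, ¬G.Adj u v)
    (hYs : ∀ u ∈ Y, ∀ v ∈ Y, ¬G.Adj u v) (φ : cycleGraph 4 ↪g G) (hφ : ∀ i, φ i ∈ X ∪ Y) :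
    (Set.range φ ∩ X).ncard = 2 := by
  have alt : ∀ i : Fin 4, φ (i + 1) ∈ X ↔ φ i ∉ X := fun i =>
    mem_iff_notMem_of_adj hXs hYs (hφ i) (hφ (i + 1)) (φ.map_adj_iff.mpr (by revert i; decide))
  rw [← Set.image_preimage_eq_range_inter, Set.ncard_image_of_injective _ φ.injective]
  have h1 := alt 0
  have h2 := alt 1
  have h3 := alt 2
  by_cases h0 : φ 0 ∈ X
  · have : φ ⁻¹' X = {0, 2} := by
      ext i
      fin_cases i <;> simp_all
    rw [this]
    exact Set.ncard_pair (by decide)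
  · have : φ ⁻¹' X = {1, 3} := by
      ext i
      fin_cases i <;> simp_all
    rw [this]
    exact Set.ncard_pair (by decide)

end Bipartite

section ClassB

variable {V : Type*} {G : SimpleGraph V} {X Y Z W : Set V} {x y : V}

lemma neighborSet_subset_pair (hpart : ∀ v : V, v ∈ X ∨ v ∈ Y ∨ v ∈ Z ∨ v ∈ W)
    (hZs : ∀ u ∈ Z, ∀ v ∈ Z, ¬G.Adj u v) (hWs : ∀ u ∈ W, ∀ v ∈ W, ¬G.Adj u v)
    (hW : ∀ w ∈ W, ∀ v ∈ X ∪ Y ∪ Z, ¬G.Adj w v)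
    (hZ : ∀ z ∈ Z, ∀ v ∈ X ∪ Y, v ≠ x → v ≠ y → ¬G.Adj z v) {v : V} (hv : v ∉ X ∪ Y) :
    G.neighborSet v ⊆ {x, y} := by
  intro u hvu
  rcases hpart v with h | h | hvZ | hvW
  · exact absurd (Or.inl h) hv
  · exact absurd (Or.inr h) hv
  · by_contra hxy
    simp only [Set.mem_insert_iff, Set.mem_singleton_iff, not_or] at hxy
    rcases hpart u with h | h | h | h
    · exact hZ v hvZ u (Or.inl h) hxy.1 hxy.2 hvu
    · exact hZ v hvZ u (Or.inr h) hxy.1 hxy.2 hvu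
    · exact hZs v hvZ u h hvu
    · exact hW u h v (Or.inr hvZ) hvu.symm
  · exfalso
    rcases hpart u with h | h | h | h
    · exact hW v hvW u (Or.inl (Or.inl h)) hvu
    · exact hW v hvW u (Or.inl (Or.inr h)) hvu
    · exact hW v hvW u (Or.inr h) hvu
    · exact hWs v hvW u h hvu

lemma mem_union_of_isHole (hpart : ∀ v : V, v ∈ X ∨ v ∈ Y ∨ v ∈ Z ∨ v ∈ W)
    (hZs : ∀ u ∈ Z, ∀ v ∈ Z, ¬G.Adj u v) (hWs : ∀ u ∈ W, ∀ v ∈ W, ¬G.Adj u v)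
    (hW : ∀ w ∈ W, ∀ v ∈ X ∪ Y ∪ Z, ¬G.Adj w v)
    (hZ : ∀ z ∈ Z, ∀ v ∈ X ∪ Y, v ≠ x → v ≠ y → ¬G.Adj z v) (hxy : G.Adj x y)
    {n : ℕ} (hn : 4 ≤ n) (φ : cycleGraph n ↪g G) (i : Fin n) : φ i ∈ X ∪ Y := by
  by_contra hi
  have hclique : G.IsClique (G.neighborSet (φ i)) :=
    (isClique_pair.mpr fun _ => hxy).subset (neighborSet_subset_pair hpart hZs hWs hW hZ hi)
  exact not_isClique_neighborSet_cycleGraph hn i (φ.isClique_neighborSet hclique)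

lemma ncard_sep_adj_le_two (hpart : ∀ v : V, v ∈ X ∨ v ∈ Y ∨ v ∈ Z ∨ v ∈ W)
    (hXs : ∀ u ∈ X, ∀ v ∈ X, ¬G.Adj u v) (hYs : ∀ u ∈ Y, ∀ v ∈ Y, ¬G.Adj u v)
    (hZs : ∀ u ∈ Z, ∀ v ∈ Z, ¬G.Adj u v) (hWs : ∀ u ∈ W, ∀ v ∈ W, ¬G.Adj u v)
    (hW : ∀ w ∈ W, ∀ v ∈ X ∪ Y ∪ Z, ¬G.Adj w v)
    (hZ : ∀ z ∈ Z, ∀ v ∈ X ∪ Y, v ≠ x → v ≠ y → ¬G.Adj z v)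
    (φ : cycleGraph 4 ↪g G) (hφ : ∀ i, φ i ∈ X ∪ Y) (v : V) :
    {u ∈ Set.range φ | G.Adj v u}.ncard ≤ 2 := by
  have hfin : (Set.range φ).Finite := Set.finite_range φ
  have hXY : Set.range φ ⊆ X ∪ Y := Set.range_subset_iff.mpr hφ
  by_cases hv : v ∈ X ∪ Y
  · rcases hv with hv | hv
    · exact (Set.ncard_le_ncard (sep_adj_subset_inter hXs hXY hv) (hfin.inter_of_left _)).trans_eq
        (ncard_range_inter_eq_two hYs hXs φ fun i => (hφ i).symm)
    · exact (Set.ncard_le_ncard (sep_adj_subset_inter hYs (Set.union_comm X Y ▸ hXY) hv)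
        (hfin.inter_of_left _)).trans_eq (ncard_range_inter_eq_two hXs hYs φ hφ)
  · calc {u ∈ Set.range φ | G.Adj v u}.ncard
        ≤ ({x, y} : Set V).ncard := Set.ncard_le_ncard
          (fun u hu => neighborSet_subset_pair hpart hZs hWs hW hZ hv hu.2) (Set.toFinite _)
      _ ≤ ({y} : Set V).ncard + 1 := Set.ncard_insert_le x {y}
      _ = 2 := by rw [Set.ncard_singleton]

end ClassB

theorem stmt_11_general {V : Type*} (G : SimpleGraph V) (X Y Z W : Set V) (x y : V)
    (hpart : ∀ v : V, v ∈ X ∨ v ∈ Y ∨ v ∈ Z ∨ v ∈ W)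
    (hXs : ∀ u ∈ X, ∀ v ∈ X, ¬G.Adj u v) (hYs : ∀ u ∈ Y, ∀ v ∈ Y, ¬G.Adj u v)
    (hZs : ∀ u ∈ Z, ∀ v ∈ Z, ¬G.Adj u v) (hWs : ∀ u ∈ W, ∀ v ∈ W, ¬G.Adj u v)
    (hyY : y ∈ Y)
    (hP5 : ¬∃ f : Fin 5 ↪ V, (∀ i, f i ∈ X ∪ Y) ∧
      ∀ i j, G.Adj (f i) (f j) ↔ path5.Adj i j)
    (hW : ∀ w ∈ W, ∀ v ∈ X ∪ Y ∪ Z, ¬G.Adj w v)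
    (hxY : ∀ v ∈ Y, G.Adj x v)
    (hZ : ∀ z ∈ Z, G.Adj z x ∧ G.Adj z y ∧
      ∀ v ∈ X ∪ Y, v ≠ x → v ≠ y → ¬G.Adj z v) :
    (∀ s : Set V, IsHoleSet G s →
      s.ncard = 4 ∧ (s ∩ X).ncard = 2 ∧ (s ∩ Y).ncard = 2 ∧
        ∀ v ∉ s, ({u ∈ s | G.Adj v u}).ncard ≤ 2) ∧
    ¬ContainsWheel G := by
  have hxy : G.Adj x y := hxY y hyY
  have hZ' : ∀ z ∈ Z, ∀ v ∈ X ∪ Y, v ≠ x → v ≠ y → ¬G.Adj z v := fun z hz => (hZ z hz).2.2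
  have holes : ∀ s, IsHoleSet G s → s.ncard = 4 ∧ (s ∩ X).ncard = 2 ∧ (s ∩ Y).ncard = 2 ∧
      ∀ v, {u ∈ s | G.Adj v u}.ncard ≤ 2 := by
    intro s hs
    obtain ⟨n, hn, φ, rfl⟩ := hs.exists_embedding
    have hφ := mem_union_of_isHole hpart hZs hWs hW hZ' hxy hn φ
    obtain rfl := length_eq_four_of_isHole hXs hYs hP5 hn φ hφ
    refine ⟨by rw [Set.ncard_range_of_injective φ.injective, Nat.card_fin],
      ncard_range_inter_eq_two hXs hYs φ hφ, ncard_range_inter_eq_two hYs hXs φ fun i => (hφ i).symm,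
      ncard_sep_adj_le_two hpart hXs hYs hZs hWs hW hZ' φ hφ⟩
  refine ⟨fun s hs => ?_, fun hwheel => ?_⟩
  · obtain ⟨h4, hX, hY, hadj⟩ := holes s hs
    exact ⟨h4, hX, hY, fun v _ => hadj v⟩
  · obtain ⟨s, hs, v, -, h3⟩ := hwheel.exists_isHoleSet
    exact absurd ((holes s hs).2.2.2 v) (by omega)

theorem stmt_11 {V : Type*} (G : SimpleGraph V) (X Y Z W : Set V) (x y : V)
    (hpart : ∀ v : V, v ∈ X ∨ v ∈ Y ∨ v ∈ Z ∨ v ∈ W)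
    (hXY : X ∩ Y = ∅) (hXZ : X ∩ Z = ∅) (hXW : X ∩ W = ∅)
    (hYZ : Y ∩ Z = ∅) (hYW : Y ∩ W = ∅) (hZW : Z ∩ W = ∅)
    (hXs : ∀ u ∈ X, ∀ v ∈ X, ¬G.Adj u v) (hYs : ∀ u ∈ Y, ∀ v ∈ Y, ¬G.Adj u v)
    (hZs : ∀ u ∈ Z, ∀ v ∈ Z, ¬G.Adj u v) (hWs : ∀ u ∈ W, ∀ v ∈ W, ¬G.Adj u v)
    (hxX : x ∈ X) (hyY : y ∈ Y)
    (hX2 : ∃ x' ∈ X, x' ≠ x) (hY2 : ∃ y' ∈ Y, y' ≠ y)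
    (hconn : (G.induce (X ∪ Y)).Connected)
    (hP5 : ¬∃ f : Fin 5 ↪ V, (∀ i, f i ∈ X ∪ Y) ∧
      ∀ i j, G.Adj (f i) (f j) ↔ path5.Adj i j)
    (hW : ∀ w ∈ W, ∀ v ∈ X ∪ Y ∪ Z, ¬G.Adj w v)
    (hxY : ∀ v ∈ Y, G.Adj x v) (hyX : ∀ v ∈ X, G.Adj y v)
    (hZ : ∀ z ∈ Z, G.Adj z x ∧ G.Adj z y ∧
      ∀ v ∈ X ∪ Y, v ≠ x → v ≠ y → ¬G.Adj z v) :
    (∀ s : Set V, IsHoleSet G s →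
      s.ncard = 4 ∧ (s ∩ X).ncard = 2 ∧ (s ∩ Y).ncard = 2 ∧
        ∀ v ∉ s, ({u ∈ s | G.Adj v u}).ncard ≤ 2) ∧
    ¬ContainsWheel G :=
  stmt_11_general G X Y Z W x y hpart hXs hYs hZs hWs hyY hP5 hW hxY hZ
end

section
/- Every graph that is a 5-cycle, 6-cycle, split graph, or member of class A, B, or C contains no induced wheel. -/
open SimpleGraph

/-- Class A (see Maffray, "Graphs with no induced wheel or antiwheel"). -/
def InClassA {V : Type*} (G : SimpleGraph V) : Prop :=
  ∃ (a b c d e : V) (X : Set V),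
    X.Nonempty ∧
    (∀ v : V, v = a ∨ v = b ∨ v = c ∨ v = d ∨ v = e ∨ v ∈ X) ∧
    a ∉ X ∧ b ∉ X ∧ c ∉ X ∧ d ∉ X ∧ e ∉ X ∧
    a ≠ b ∧ a ≠ c ∧ a ≠ d ∧ a ≠ e ∧ b ≠ c ∧ b ≠ d ∧ b ≠ e ∧ c ≠ d ∧ c ≠ e ∧ d ≠ e ∧
    G.Adj a b ∧ G.Adj b c ∧ G.Adj c d ∧ G.Adj d a ∧ ¬G.Adj a c ∧ ¬G.Adj b d ∧
    G.IsClique X ∧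
    (∀ u ∈ X, G.Adj u c ∧ G.Adj u d ∧ ¬G.Adj u a ∧ ¬G.Adj u b) ∧
    (∀ u ∈ X, G.Adj e u) ∧ ¬G.Adj e a ∧ ¬G.Adj e b ∧ ¬(G.Adj e c ∧ G.Adj e d)

/-- Class B. -/
def InClassB {V : Type*} (G : SimpleGraph V) : Prop :=
  ∃ (X Y Z W : Set V) (x y : V),
    (∀ v : V, v ∈ X ∨ v ∈ Y ∨ v ∈ Z ∨ v ∈ W) ∧
    X ∩ Y = ∅ ∧ X ∩ Z = ∅ ∧ X ∩ W = ∅ ∧ Y ∩ Z = ∅ ∧ Y ∩ W = ∅ ∧ Z ∩ W = ∅ ∧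
    (∀ u ∈ X, ∀ v ∈ X, ¬G.Adj u v) ∧ (∀ u ∈ Y, ∀ v ∈ Y, ¬G.Adj u v) ∧
    (∀ u ∈ Z, ∀ v ∈ Z, ¬G.Adj u v) ∧ (∀ u ∈ W, ∀ v ∈ W, ¬G.Adj u v) ∧
    x ∈ X ∧ y ∈ Y ∧
    (∃ x' ∈ X, x' ≠ x) ∧ (∃ y' ∈ Y, y' ≠ y) ∧
    (G.induce (X ∪ Y)).Connected ∧
    (¬∃ f : Fin 5 ↪ V, (∀ i, f i ∈ X ∪ Y) ∧
      ∀ i j, G.Adj (f i) (f j) ↔ path5.Adj i j) ∧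
    (∀ w ∈ W, ∀ v ∈ X ∪ Y ∪ Z, ¬G.Adj w v) ∧
    (∀ v ∈ Y, G.Adj x v) ∧ (∀ v ∈ X, G.Adj y v) ∧
    (∀ z ∈ Z, G.Adj z x ∧ G.Adj z y ∧ ∀ v ∈ X ∪ Y, v ≠ x → v ≠ y → ¬G.Adj z v)

/-- Class C. -/
def InClassC {V : Type*} (G : SimpleGraph V) : Prop :=
  ∃ (X Y : Set V) (x1 x2 y1 y2 : V),
    (∀ v : V, v ∈ X ∨ v ∈ Y) ∧ X ∩ Y = ∅ ∧
    G.IsClique X ∧ G.IsClique Y ∧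
    x1 ∈ X ∧ x2 ∈ X ∧ y1 ∈ Y ∧ y2 ∈ Y ∧ x1 ≠ x2 ∧ y1 ≠ y2 ∧
    (∀ u ∈ X, ∀ v ∈ Y, (G.Adj u v ↔ (u = x1 ∧ v = y1) ∨ (u = x2 ∧ v = y2)))

/-! A hole is triangle-free and each of its vertices has two nonadjacent neighbours on it, so
neither a hole vertex nor a hub (which sees at least three hole vertices) can have its
neighbours on the hole inside a clique. Cycles have maximum degree two. In a split graph a hole
vertex on the stable side would have its hole-neighbours in the clique, so the whole hole would
lie in the clique. In class A, `a` and `b` have degree two, `e` and then `b` (or `a`) cannot lie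
on the hole, and every other hub has its hole-neighbours in the clique `{c, d} ∪ X`. In class B
a hole avoids `Z ∪ W`, so it is a hole of a P5-free bipartite graph, hence a 4-hole, and a hub
in `X ∪ Y` would see three of its vertices in one stable set. In class C a hub cannot see a hole
vertex in the other clique, since the hub would be that vertex's only neighbour across the
matching. -/

lemma cycG_adj_iff {n : ℕ} (i j : Fin n) :
    (cycG n).Adj i j ↔ (i : ℕ) ≠ j ∧
      ((i : ℕ) + 1 = j ∨ (j : ℕ) + 1 = i ∨ ((i : ℕ) + 1 = n ∧ (j : ℕ) = 0) ∨
        ((j : ℕ) + 1 = n ∧ (i : ℕ) = 0)) := by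
  have succ_mod : ∀ a b : Fin n, ((a : ℕ) + 1) % n = b ↔
      (a : ℕ) + 1 = b ∨ ((a : ℕ) + 1 = n ∧ (b : ℕ) = 0) := by
    intro a b
    obtain h | h : (a : ℕ) + 1 < n ∨ (a : ℕ) + 1 = n := by omega
    · rw [Nat.mod_eq_of_lt h]
      omega
    · rw [h, Nat.mod_self]
      omega
  rw [cycG, fromRel_adj, succ_mod, succ_mod, Fin.ne_iff_vne]
  tauto

lemma path5_adj_iff (i j : Fin 5) :
    path5.Adj i j ↔ (i : ℕ) + 1 = j ∨ (j : ℕ) + 1 = i := by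
  rw [path5, fromRel_adj, Fin.ne_iff_vne]
  omega

lemma cycG_ncard_neighborSet_le_two (m : ℕ) (v : Fin m) :
    ((cycG m).neighborSet v).ncard ≤ 2 := by
  by_contra! h
  obtain ⟨a, ha, b, hb, c, hc, hab, hac, hbc⟩ := (Set.two_lt_ncard (Set.toFinite _)).1 h
  simp only [mem_neighborSet, cycG_adj_iff] at ha hb hc
  rw [Ne, Fin.ext_iff] at hab hac hbc
  omega

lemma cycG_exists_nonadj_nbrs {n : ℕ} (hn : 4 ≤ n) (i : Fin n) :
    ∃ j k, (cycG n).Adj i j ∧ (cycG n).Adj i k ∧ j ≠ k ∧ ¬(cycG n).Adj j k := by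
  have hi := i.isLt
  obtain ⟨j, hj⟩ :
      ∃ j : Fin n, (i : ℕ) + 1 = n ∧ (j : ℕ) = 0 ∨ (i : ℕ) + 1 < n ∧ j = (i : ℕ) + 1 :=
    if h : (i : ℕ) + 1 = n then ⟨⟨0, by omega⟩, .inl ⟨h, rfl⟩⟩
    else ⟨⟨i + 1, by omega⟩, .inr ⟨by omega, rfl⟩⟩
  obtain ⟨k, hk⟩ :
      ∃ k : Fin n, (i : ℕ) = 0 ∧ (k : ℕ) + 1 = n ∨ 0 < (i : ℕ) ∧ k + 1 = (i : ℕ) :=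
    if h : (i : ℕ) = 0 then ⟨⟨n - 1, by omega⟩, .inl ⟨h, by simp only; omega⟩⟩
    else ⟨⟨i - 1, by omega⟩, .inr ⟨by omega, by simp only; omega⟩⟩
  refine ⟨j, k, (cycG_adj_iff _ _).2 (by omega), (cycG_adj_iff _ _).2 (by omega),
    Fin.ne_of_val_ne (by omega), fun hjk => ?_⟩
  rw [cycG_adj_iff] at hjk
  omega

lemma cycG_adj_castLE_iff {n : ℕ} (hn : 6 ≤ n) (i j : Fin 5) :
    (cycG n).Adj (Fin.castLE (by omega) i) (Fin.castLE (by omega) j) ↔ path5.Adj i j := by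
  rw [cycG_adj_iff, path5_adj_iff]
  simp only [Fin.val_castLE]
  omega

def IsHole {V : Type*} (G : SimpleGraph V) {n : ℕ} (f : Fin n ↪ V) : Prop :=
  4 ≤ n ∧ ∀ i j, G.Adj (f i) (f j) ↔ (cycG n).Adj i j

lemma ContainsWheel.exists_isHole {V : Type*} {G : SimpleGraph V} (hw : ContainsWheel G) :
    ∃ (n : ℕ) (f : Fin n ↪ V) (hub : V), IsHole G f ∧ hub ∉ Set.range f ∧
      3 ≤ (G.neighborSet hub ∩ Set.range f).ncard := by
  obtain ⟨n, hn, f, hub, hhub, hf, hcard⟩ := hw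
  have himage : f '' {i | G.Adj hub (f i)} = G.neighborSet hub ∩ Set.range f := by
    ext v
    constructor
    · rintro ⟨i, hi, rfl⟩
      exact ⟨hi, i, rfl⟩
    · rintro ⟨hv, i, rfl⟩
      exact ⟨i, hv, rfl⟩
  refine ⟨n, f, hub, ⟨hn, hf⟩, fun ⟨i, hi⟩ => hhub i hi.symm, ?_⟩
  rwa [← himage, Set.ncard_image_of_injective _ f.injective]

lemma ContainsWheel.map {V W : Type*} {G : SimpleGraph V} {H : SimpleGraph W} (e : G ↪g H)
    (hw : ContainsWheel G) : ContainsWheel H := by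
  obtain ⟨n, hn, f, hub, hhub, hf, hcard⟩ := hw
  refine ⟨n, hn, f.trans e.toEmbedding, e hub, fun i h => hhub i (e.injective h),
    fun i j => e.map_adj_iff.trans (hf i j), ?_⟩
  simpa only [Function.Embedding.trans_apply, RelEmbedding.coe_toEmbedding, e.map_adj_iff]
    using hcard

theorem not_containsWheel_cycG (m : ℕ) : ¬ContainsWheel (cycG m) := by
  intro hw
  obtain ⟨n, f, hub, -, -, hcard⟩ := hw.exists_isHole
  have := hcard.trans ((Set.ncard_le_ncard Set.inter_subset_left).trans
    (cycG_ncard_neighborSet_le_two m hub))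
  omega

namespace IsHole

variable {V : Type*} {G : SimpleGraph V} {n : ℕ} {f : Fin n ↪ V}

lemma ncard_le_two_of_isClique (hf : IsHole G f) {Q : Set V} (hQf : Q ⊆ Set.range f)
    (hQ : G.IsClique Q) : Q.ncard ≤ 2 := by
  by_contra! h
  obtain ⟨_, ha, _, hb, _, hc, hab, hac, hbc⟩ :=
    (Set.two_lt_ncard ((Set.finite_range f).subset hQf)).1 h
  obtain ⟨i, rfl⟩ := hQf ha
  obtain ⟨j, rfl⟩ := hQf hb
  obtain ⟨k, rfl⟩ := hQf hc
  have hij := (hf.2 i j).1 (hQ ha hb hab)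
  have hik := (hf.2 i k).1 (hQ ha hc hac)
  have hjk := (hf.2 j k).1 (hQ hb hc hbc)
  rw [cycG_adj_iff] at hij hik hjk
  have := hf.1
  omega

lemma not_isClique_neighborSet_inter_range (hf : IsHole G f) (i : Fin n) :
    ¬G.IsClique (G.neighborSet (f i) ∩ Set.range f) := by
  intro hQ
  obtain ⟨j, k, hij, hik, hjk, hnjk⟩ := cycG_exists_nonadj_nbrs hf.1 i
  refine hnjk ((hf.2 j k).1 (hQ ?_ ?_ (f.injective.ne hjk)))
  · exact ⟨(hf.2 i j).2 hij, j, rfl⟩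
  · exact ⟨(hf.2 i k).2 hik, k, rfl⟩

lemma ncard_le_two_of_isIndepSet (hf : IsHole G f) (h4 : n = 4) {T : Set V}
    (hTf : T ⊆ Set.range f) (hT : G.IsIndepSet T) : T.ncard ≤ 2 := by
  subst h4
  by_contra! h
  obtain ⟨_, ha, _, hb, _, hc, hab, hac, hbc⟩ :=
    (Set.two_lt_ncard ((Set.finite_range f).subset hTf)).1 h
  obtain ⟨i, rfl⟩ := hTf ha
  obtain ⟨j, rfl⟩ := hTf hb
  obtain ⟨k, rfl⟩ := hTf hc
  have hij := mt (hf.2 i j).2 (hT ha hb hab)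
  have hik := mt (hf.2 i k).2 (hT ha hc hac)
  have hjk := mt (hf.2 j k).2 (hT hb hc hbc)
  rw [cycG_adj_iff] at hij hik hjk
  rw [Ne, f.apply_eq_iff_eq, Fin.ext_iff] at hab hac hbc
  omega

lemma not_isClique_of_three_le_ncard (hf : IsHole G f) {T : Set V} (hTf : T ⊆ Set.range f)
    (hT : 3 ≤ T.ncard) : ¬G.IsClique T := fun hQ => by
  have := hf.ncard_le_two_of_isClique hTf hQ
  omega

lemma notMem_range_of_neighborSet_subset_pair (hf : IsHole G f) {v p q : V}
    (hv : G.neighborSet v ⊆ {p, q}) (hq : q ∉ Set.range f) : v ∉ Set.range f := by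
  rintro ⟨i, rfl⟩
  refine hf.not_isClique_neighborSet_inter_range i ((isClique_singleton p).subset ?_)
  rintro w ⟨hw, hwf⟩
  exact (hv hw).resolve_right fun hwq => hq (hwq ▸ hwf)

end IsHole

section Bipartite

variable {V : Type*} {G : SimpleGraph V} {X Y : Set V}

lemma mem_iff_notMem_of_adj_s17 (hX : ∀ u ∈ X, ∀ v ∈ X, ¬G.Adj u v)
    (hY : ∀ u ∈ Y, ∀ v ∈ Y, ¬G.Adj u v) {u v : V} (hu : u ∈ X ∪ Y) (hv : v ∈ X ∪ Y)
    (huv : G.Adj u v) : u ∈ X ↔ v ∉ X := by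
  constructor
  · exact fun huX hvX => hX u huX v hvX huv
  · intro hvX
    by_contra huX
    exact hY u (hu.resolve_left huX) v (hv.resolve_left hvX) huv

lemma IsHole.length_ne_five {n : ℕ} {f : Fin n ↪ V} (hf : IsHole G f) (hXY : ∀ i, f i ∈ X ∪ Y)
    (hX : ∀ u ∈ X, ∀ v ∈ X, ¬G.Adj u v) (hY : ∀ u ∈ Y, ∀ v ∈ Y, ¬G.Adj u v) : n ≠ 5 := by
  rintro rfl
  have alt (i j : Fin 5) (hij : (cycG 5).Adj i j) : f i ∈ X ↔ f j ∉ X :=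
    mem_iff_notMem_of_adj_s17 hX hY (hXY i) (hXY j) ((hf.2 i j).2 hij)
  have := alt 0 1 (by rw [cycG_adj_iff]; decide)
  have := alt 1 2 (by rw [cycG_adj_iff]; decide)
  have := alt 2 3 (by rw [cycG_adj_iff]; decide)
  have := alt 3 4 (by rw [cycG_adj_iff]; decide)
  have := alt 4 0 (by rw [cycG_adj_iff]; decide)
  tauto

lemma IsHole.exists_induced_path5 {n : ℕ} {f : Fin n ↪ V} (hf : IsHole G f) (hn : 6 ≤ n) :
    ∃ g : Fin 5 ↪ V, (∀ i, g i ∈ Set.range f) ∧ ∀ i j, G.Adj (g i) (g j) ↔ path5.Adj i j :=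
  ⟨(Fin.castLEEmb (by omega)).trans f, fun i => ⟨_, rfl⟩,
    fun i j => (hf.2 _ _).trans (cycG_adj_castLE_iff hn i j)⟩

lemma IsHole.length_eq_four {n : ℕ} {f : Fin n ↪ V} (hf : IsHole G f) (hXY : ∀ i, f i ∈ X ∪ Y)
    (hX : ∀ u ∈ X, ∀ v ∈ X, ¬G.Adj u v) (hY : ∀ u ∈ Y, ∀ v ∈ Y, ¬G.Adj u v)
    (hP5 : ¬∃ g : Fin 5 ↪ V, (∀ i, g i ∈ X ∪ Y) ∧ ∀ i j, G.Adj (g i) (g j) ↔ path5.Adj i j) :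
    n = 4 := by
  have := hf.1
  have := hf.length_ne_five hXY hX hY
  by_contra h
  obtain ⟨g, hgf, hg⟩ := hf.exists_induced_path5 (by omega)
  refine hP5 ⟨g, fun i => ?_, hg⟩
  obtain ⟨j, hj⟩ := hgf i
  exact hj ▸ hXY j

end Bipartite

section Classes

variable {V : Type*} {G : SimpleGraph V}

lemma IsSplit.not_isHole (hG : IsSplit G) {n : ℕ} (f : Fin n ↪ V) : ¬IsHole G f := by
  obtain ⟨S, K, hall, -, hS, hK⟩ := hG
  intro hf
  have hfS (i : Fin n) : f i ∉ S := fun hi =>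
    hf.not_isClique_neighborSet_inter_range i <| hK.subset fun v hv =>
      (hall v).resolve_left fun hvS => hS _ hi _ hvS hv.1
  refine hf.not_isClique_neighborSet_inter_range ⟨0, by have := hf.1; omega⟩ (hK.subset ?_)
  rintro _ ⟨-, j, rfl⟩
  exact (hall (f j)).resolve_left (hfS j)

lemma IsSplit.not_containsWheel (hG : IsSplit G) : ¬ContainsWheel G := fun hw => by
  obtain ⟨n, f, -, hf, -⟩ := hw.exists_isHole
  exact hG.not_isHole f hf

lemma InClassA.not_containsWheel (hG : InClassA G) : ¬ContainsWheel G := fun hw => by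
  obtain ⟨a, b, c, d, e, X, -, hall, -, -, hcX, hdX, heX, hab, hac, had, hae, hbc, hbd, hbe, hcd,
    hce, hde, hab', hbc', hcd', hda', hac', hbd', hXcl, hXadj, heXadj, hea, heb, hecd⟩ := hG
  obtain ⟨n, f, hub, hf, hhub, h3⟩ := hw.exists_isHole
  have hNa : G.neighborSet a ⊆ {b, d} := by
    intro v hv
    rcases hall v with rfl | rfl | rfl | rfl | rfl | hv' <;> simp_all [adj_comm]
  have hNb : G.neighborSet b ⊆ {a, c} := by
    intro v hv
    rcases hall v with rfl | rfl | rfl | rfl | rfl | hv' <;> simp_all [adj_comm]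
  have hNc : G.neighborSet c ⊆ {b, e} ∪ insert d X := by
    intro v hv
    rcases hall v with rfl | rfl | rfl | rfl | rfl | hv' <;> simp_all [adj_comm]
  have hNd : G.neighborSet d ⊆ {a, e} ∪ insert c X := by
    intro v hv
    rcases hall v with rfl | rfl | rfl | rfl | rfl | hv' <;> simp_all [adj_comm]
  have hNe : G.neighborSet e ⊆ insert c (insert d X) := by
    intro v hv
    rcases hall v with rfl | rfl | rfl | rfl | rfl | hv' <;> simp_all [adj_comm]
  have hNX : ∀ u ∈ X, G.neighborSet u ⊆ insert e (insert c (insert d X)) := by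
    intro u hu v hv
    rcases hall v with rfl | rfl | rfl | rfl | rfl | hv' <;> simp_all [adj_comm]
  have hQ : G.IsClique (insert c (insert d X)) := by
    refine (hXcl.insert fun u hu _ => (hXadj u hu).2.1.symm).insert ?_
    rintro u (rfl | hu) _
    exacts [hcd', (hXadj u hu).1.symm]
  have he : e ∉ Set.range f := by
    rintro ⟨i, rfl⟩
    exact hf.not_isClique_neighborSet_inter_range i (hQ.subset (Set.inter_subset_left.trans hNe))
  have hnc := hf.not_isClique_of_three_le_ncard Set.inter_subset_right h3
  have hpair {p q : V} (h : G.neighborSet hub ⊆ {p, q}) : False := by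
    have := h3.trans <| (Set.ncard_le_ncard (Set.inter_subset_left.trans h)).trans
      (Set.ncard_insert_le p {q})
    rw [Set.ncard_singleton] at this
    omega
  rcases hall hub with rfl | rfl | rfl | rfl | rfl | hubX
  · exact hpair hNa
  · exact hpair hNb
  · have hb := hf.notMem_range_of_neighborSet_subset_pair hNb hhub
    refine hnc (hQ.subset ?_)
    rintro w ⟨hw, hwf⟩
    rcases hNc hw with (rfl | rfl) | hw
    exacts [absurd hwf hb, absurd hwf he, Set.mem_insert_of_mem _ hw]
  · have ha := hf.notMem_range_of_neighborSet_subset_pair hNa hhub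
    refine hnc (hQ.subset ?_)
    rintro w ⟨hw, hwf⟩
    rcases hNd hw with (rfl | rfl) | rfl | hw
    exacts [absurd hwf ha, absurd hwf he, Set.mem_insert _ _, by simp [hw]]
  · exact hnc (hQ.subset (Set.inter_subset_left.trans hNe))
  · refine hnc (hQ.subset ?_)
    rintro w ⟨hw, hwf⟩
    exact (hNX hub hubX hw).resolve_left fun hwe => he (hwe ▸ hwf)

lemma InClassB.not_containsWheel (hG : InClassB G) : ¬ContainsWheel G := fun hw => by
  obtain ⟨X, Y, Z, W, x, y, hall, -, -, -, -, -, -, hX, hY, hZ, hW, -, hy, -, -, -, hP5, hWanti,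
    hxY, -, hZadj⟩ := hG
  obtain ⟨n, f, hub, hf, hhub, h3⟩ := hw.exists_isHole
  have hNW : ∀ w ∈ W, G.neighborSet w ⊆ ∅ := by
    intro w hw v hv
    rcases hall v with h | h | h | h
    · exact hWanti w hw v (.inl (.inl h)) hv
    · exact hWanti w hw v (.inl (.inr h)) hv
    · exact hWanti w hw v (.inr h) hv
    · exact hW w hw v h hv
  have hNZ : ∀ z ∈ Z, G.neighborSet z ⊆ {x, y} := by
    intro z hz v hv
    by_contra hvxy
    simp only [Set.mem_insert_iff, Set.mem_singleton_iff, not_or] at hvxy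
    rcases hall v with h | h | h | h
    · exact (hZadj z hz).2.2 v (.inl h) hvxy.1 hvxy.2 hv
    · exact (hZadj z hz).2.2 v (.inr h) hvxy.1 hvxy.2 hv
    · exact hZ z hz v h hv
    · exact hWanti v h z (.inr hz) hv.symm
  have hxy : G.IsClique {x, y} := isClique_pair.2 fun _ => hxY y hy
  have hfXY (i : Fin n) : f i ∈ X ∪ Y := by
    have hnc := hf.not_isClique_neighborSet_inter_range i
    rcases hall (f i) with h | h | h | h
    · exact .inl h
    · exact .inr h
    · exact absurd (hxy.subset (Set.inter_subset_left.trans (hNZ _ h))) hnc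
    · exact absurd (isClique_empty.subset (Set.inter_subset_left.trans (hNW _ h))) hnc
  have h4 := hf.length_eq_four hfXY hX hY hP5
  have hub_notMem {P R : Set V} (hP : ∀ u ∈ P, ∀ v ∈ P, ¬G.Adj u v)
      (hR : ∀ u ∈ R, ∀ v ∈ R, ¬G.Adj u v) (hPR : ∀ i, f i ∈ P ∪ R) : hub ∉ P := fun hubP => by
    have hsub : G.neighborSet hub ∩ Set.range f ⊆ R := by
      rintro _ ⟨hadj, i, rfl⟩
      exact (hPR i).resolve_left fun hiP => hP hub hubP _ hiP hadj
    have := hf.ncard_le_two_of_isIndepSet h4 Set.inter_subset_right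
      fun u hu v hv _ => hR u (hsub hu) v (hsub hv)
    omega
  have hnc := hf.not_isClique_of_three_le_ncard Set.inter_subset_right h3
  rcases hall hub with h | h | h | h
  · exact hub_notMem hX hY hfXY h
  · exact hub_notMem hY hX (fun i => Set.union_comm X Y ▸ hfXY i) h
  · exact hnc (hxy.subset (Set.inter_subset_left.trans (hNZ _ h)))
  · exact hnc (isClique_empty.subset (Set.inter_subset_left.trans (hNW _ h)))

lemma IsHole.neighborSet_inter_range_subset_of_unique_adj {n : ℕ} {f : Fin n ↪ V}
    (hf : IsHole G f) {X Y : Set V} (hXY : ∀ v, v ∈ X ∨ v ∈ Y) (hY : G.IsClique Y)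
    (huniq : ∀ v ∈ Y, ∀ w ∈ X, ∀ w' ∈ X, G.Adj w v → G.Adj w' v → w = w') {hub : V}
    (hhub : hub ∉ Set.range f) (hubX : hub ∈ X) : G.neighborSet hub ∩ Set.range f ⊆ X := by
  rintro _ ⟨hadj, i, rfl⟩
  refine (hXY (f i)).resolve_right fun hiY =>
    hf.not_isClique_neighborSet_inter_range i (hY.subset ?_)
  rintro _ ⟨hadj', j, rfl⟩
  refine (hXY (f j)).resolve_left fun hjX => hhub ⟨j, ?_⟩
  exact huniq _ hiY _ hjX _ hubX hadj'.symm hadj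

lemma InClassC.not_containsWheel (hG : InClassC G) : ¬ContainsWheel G := fun hw => by
  obtain ⟨X, Y, x1, x2, y1, y2, hall, -, hX, hY, -, -, -, -, hx, hy, hcross⟩ := hG
  obtain ⟨n, f, hub, hf, hhub, h3⟩ := hw.exists_isHole
  have uniqX : ∀ v ∈ Y, ∀ w ∈ X, ∀ w' ∈ X, G.Adj w v → G.Adj w' v → w = w' := by
    intro v hv w hw w' hw' h h'
    have := (hcross w hw v hv).1 h
    have := (hcross w' hw' v hv).1 h'
    grind
  have uniqY : ∀ v ∈ X, ∀ w ∈ Y, ∀ w' ∈ Y, G.Adj w v → G.Adj w' v → w = w' := by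
    intro v hv w hw w' hw' h h'
    have := (hcross v hv w hw).1 h.symm
    have := (hcross v hv w' hw').1 h'.symm
    grind
  have hnc := hf.not_isClique_of_three_le_ncard Set.inter_subset_right h3
  rcases hall hub with hubX | hubY
  · exact hnc <| hX.subset <|
      hf.neighborSet_inter_range_subset_of_unique_adj hall hY uniqX hhub hubX
  · exact hnc <| hY.subset <|
      hf.neighborSet_inter_range_subset_of_unique_adj (fun v => (hall v).symm) hX uniqY hhub hubY

end Classes

theorem stmt_17 {V : Type*} (G : SimpleGraph V)
    (hG : Nonempty (G ≃g cycG 5) ∨ Nonempty (G ≃g cycG 6) ∨ IsSplit G ∨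
      InClassA G ∨ InClassB G ∨ InClassC G) :
    ¬ContainsWheel G := by
  obtain ⟨⟨e⟩⟩ | ⟨⟨e⟩⟩ | hG | hG | hG | hG := hG
  · exact fun hw => not_containsWheel_cycG 5 (hw.map e.toEmbedding)
  · exact fun hw => not_containsWheel_cycG 6 (hw.map e.toEmbedding)
  · exact hG.not_containsWheel
  · exact hG.not_containsWheel
  · exact hG.not_containsWheel
  · exact hG.not_containsWheel
end
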